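/- Let 𝒜 : ℝ^{m×n} → ℝ^p be linear with δ_{2k}(𝒜) < 1, and suppose X₀ satisfies 𝒜(X₀) = b ≠ 0 with rank(X₀) ≤ k. Then X₀ is the unique minimizer of X ↦ ‖X‖_{k,2}^⋆ − ‖X‖_F over { X : 𝒜(X) = b }. -/

import Mathlib

open Matrix

theorem Matrix.isHermitian_transpose_mul_self {m n : Type*} [Fintype m] (A : Matrix m n ℝ) :
    (Aᵀ * A).IsHermitian := by
  simpa using Matrix.isHermitian_conjTranspose_mul_self A

/-- Singular values of a real `m × n` matrix, sorted in decreasing order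
(indexed by `Fin n`; `σ i = sqrt` of the `i`-th largest eigenvalue of `Aᵀ * A`). -/
noncomputable def svalsDesc {m n : ℕ} (A : Matrix (Fin m) (Fin n) ℝ) : Fin n → ℝ :=
  fun i =>
    Real.sqrt
      (((Matrix.isHermitian_transpose_mul_self A).eigenvalues ∘
        Tuple.sort (Matrix.isHermitian_transpose_mul_self A).eigenvalues) i.rev)

/-- Ky Fan 2-k-norm: `(∑_{i=1}^k σ_i(A)²)^{1/2}`. -/
noncomputable def kyFan2 {m n : ℕ} (k : ℕ) (A : Matrix (Fin m) (Fin n) ℝ) : ℝ :=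
  Real.sqrt (∑ i ∈ Finset.univ.filter (fun i : Fin n => (i : ℕ) < k), (svalsDesc A i) ^ 2)

/-- Frobenius inner product `⟨A, B⟩ = trace (Aᵀ B)`. -/
noncomputable def frobInner {m n : ℕ} (A B : Matrix (Fin m) (Fin n) ℝ) : ℝ :=
  ∑ i, ∑ j, A i j * B i j

/-- Frobenius norm. -/
noncomputable def frobNorm {m n : ℕ} (A : Matrix (Fin m) (Fin n) ℝ) : ℝ :=
  Real.sqrt (∑ i, ∑ j, (A i j) ^ 2)

/-- Dual Ky Fan 2-k-norm `‖A‖_{k,2}^⋆ = max {⟨A,X⟩ : ‖X‖_{k,2} ≤ 1}`. -/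
noncomputable def kyFan2Dual {m n : ℕ} (k : ℕ) (A : Matrix (Fin m) (Fin n) ℝ) : ℝ :=
  sSup {c : ℝ | ∃ X : Matrix (Fin m) (Fin n) ℝ, kyFan2 k X ≤ 1 ∧ c = frobInner A X}

/-- The linear map `𝒜` satisfies the restricted isometry inequality with constant `δ`
for all matrices of rank at most `r`. -/
def HasRIP {m n p : ℕ} (𝒜 : Matrix (Fin m) (Fin n) ℝ →ₗ[ℝ] EuclideanSpace ℝ (Fin p))
    (r : ℕ) (δ : ℝ) : Prop :=
  ∀ X : Matrix (Fin m) (Fin n) ℝ, X.rank ≤ r →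
    (1 - δ) * frobNorm X ≤ ‖𝒜 X‖ ∧ ‖𝒜 X‖ ≤ (1 + δ) * frobNorm X

/-!
If `X ≠ X₀` is feasible then `X - X₀ ∈ ker 𝒜`, so the restricted isometry property forbids
`rank X ≤ k` (it would give `rank (X - X₀) ≤ 2k`). It remains to show that the objective is `≤ 0`
at `X₀` and `> 0` at every `X` of rank `> k`.

If `rank A ≤ k`, let `w₁, …, w_d` (`d ≤ k`) be an orthonormal basis of the row space of `A`.
Cauchy–Schwarz against the projections of the rows of `Y` onto that space gives
`⟨A, Y⟩ ≤ ‖A‖_F (∑ₜ ‖Y wₜ‖²)^{1/2}`, and Ky Fan's maximum principle `∑ₜ ‖Y wₜ‖² ≤ ‖Y‖_{k,2}²`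
turns this into `⟨A, Y⟩ ≤ ‖A‖_F ‖Y‖_{k,2}`, hence `‖A‖_{k,2}^⋆ ≤ ‖A‖_F`. Expanding in an
eigenbasis `vⱼ` of `YᵀY`, Ky Fan's principle reads `∑ⱼ λⱼ cⱼ ≤ ∑_{j<k} λ_{(j)}` for the weights
`cⱼ = ∑ₜ ⟨vⱼ, wₜ⟩² ∈ [0, 1]` (Bessel) of total mass `d ≤ k` (Parseval): the bathtub principle.

If `rank X > k`, some singular value beyond the `k`-th is nonzero, so `‖X‖_{k,2} < ‖X‖_F`, and
testing the dual norm against `X / ‖X‖_{k,2}` gives `‖X‖_{k,2}^⋆ ≥ ‖X‖_F² / ‖X‖_{k,2} > ‖X‖_F`.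
-/

open scoped RealInnerProductSpace

lemma Multiset.map_univ_val_comp_perm {α : Type*} {n : ℕ} (f : Fin n → α)
    (σ : Equiv.Perm (Fin n)) :
    Finset.univ.val.map (f ∘ σ) = Finset.univ.val.map f := by
  rw [← Multiset.map_map, Multiset.map_univ_val_equiv]

lemma Monotone.eq_of_map_univ_eq {α : Type*} [PartialOrder α] {n : ℕ} {f g : Fin n → α}
    (hf : Monotone f) (hg : Monotone g)
    (h : Finset.univ.val.map f = Finset.univ.val.map g) : f = g := by
  rw [Fin.univ_val_map, Fin.univ_val_map, Multiset.coe_eq_coe] at h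
  exact List.ofFn_injective (h.eq_of_sortedLE hf.sortedLE_ofFn hg.sortedLE_ofFn)

open Polynomial in
lemma Matrix.IsHermitian.charpoly_smul {ι : Type*} [Fintype ι] [DecidableEq ι]
    {M : Matrix ι ι ℝ} (hM : M.IsHermitian) (c : ℝ) :
    (c • M).charpoly = ∏ i, (X - C (c * hM.eigenvalues i)) := by
  conv_lhs => rw [hM.spectral_theorem, Unitary.conjStarAlgAut_apply, ← smul_mul_assoc,
    ← mul_smul_comm, charpoly_mul_comm, ← mul_assoc]
  simp [← diagonal_smul, charpoly_diagonal]

lemma Matrix.IsHermitian.inner_toEuclideanLin_self {ι : Type*} [Fintype ι] [DecidableEq ι]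
    {M : Matrix ι ι ℝ} (hM : M.IsHermitian) (w : EuclideanSpace ℝ ι) :
    ⟪w, toEuclideanLin M w⟫ = ∑ j, hM.eigenvalues j * ⟪hM.eigenvectorBasis j, w⟫ ^ 2 := by
  rw [← hM.eigenvectorBasis.sum_inner_mul_inner]
  refine Finset.sum_congr rfl fun j _ => ?_
  have hv : toEuclideanLin M (hM.eigenvectorBasis j) =
      hM.eigenvalues j • hM.eigenvectorBasis j := by
    ext1
    simp [toLpLin_apply, hM.mulVec_eigenvectorBasis]
  rw [← isSymmetric_toEuclideanLin_iff.mpr hM, hv, real_inner_smul_left, real_inner_comm w]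
  ring

lemma Matrix.norm_sq_toEuclideanLin_eq_inner {ι κ : Type*} [Fintype ι] [DecidableEq ι]
    [Fintype κ] [DecidableEq κ] (Y : Matrix ι κ ℝ) (w : EuclideanSpace ℝ κ) :
    ‖toEuclideanLin Y w‖ ^ 2 = ⟪w, toEuclideanLin (Yᵀ * Y) w⟫ := by
  rw [← conjTranspose_eq_transpose_of_trivial, toEuclideanLin, toLpLin_mul 2 2 2, ← toEuclideanLin,
    ← toEuclideanLin, toEuclideanLin_conjTranspose_eq_adjoint, LinearMap.comp_apply,
    LinearMap.adjoint_inner_right, real_inner_self_eq_norm_sq]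

lemma Matrix.norm_sq_toEuclideanLin_eq_sum {ι κ : Type*} [Fintype ι] [Fintype κ] [DecidableEq κ]
    (Y : Matrix ι κ ℝ) (w : EuclideanSpace ℝ κ) :
    ‖toEuclideanLin Y w‖ ^ 2 = ∑ i, ⟪WithLp.toLp 2 (Y i), w⟫ ^ 2 := by
  simp [EuclideanSpace.norm_sq_eq, PiLp.inner_apply, toLpLin_apply, mulVec, dotProduct, mul_comm]

lemma Matrix.rank_sub_le {R ι κ : Type*} [Field R] [Fintype ι] [Fintype κ]
    (A B : Matrix ι κ R) : (A - B).rank ≤ A.rank + B.rank := by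
  have hrange : LinearMap.range (A - B).mulVecLin ≤
      LinearMap.range A.mulVecLin ⊔ LinearMap.range B.mulVecLin := by
    rintro _ ⟨v, rfl⟩
    rw [mulVecLin_apply, sub_mulVec]
    exact Submodule.sub_mem _ (Submodule.mem_sup_left ⟨v, rfl⟩) (Submodule.mem_sup_right ⟨v, rfl⟩)
  exact (Submodule.finrank_mono hrange).trans (Submodule.finrank_add_le_finrank_add_finrank _ _)

lemma Finset.sum_mul_le_sum_of_threshold {ι : Type*} [Fintype ι] {s : Finset ι}
    {μ γ : ι → ℝ} {t : ℝ} (ht : 0 ≤ t) (hs : ∀ i ∈ s, t ≤ μ i) (hsc : ∀ i ∉ s, μ i ≤ t)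
    (hγ0 : ∀ i, 0 ≤ γ i) (hγ1 : ∀ i, γ i ≤ 1) (hγ : ∑ i, γ i ≤ s.card) :
    ∑ i, μ i * γ i ≤ ∑ i ∈ s, μ i := by
  classical
  have hterm : ∀ i, μ i * γ i ≤ (if i ∈ s then μ i - t else 0) + t * γ i := by
    intro i
    split_ifs with hi
    · nlinarith [hs i hi, hγ1 i]
    · nlinarith [hsc i hi, hγ0 i]
  calc ∑ i, μ i * γ i ≤ ∑ i, ((if i ∈ s then μ i - t else 0) + t * γ i) :=
        Finset.sum_le_sum fun i _ => hterm i
    _ = ∑ i ∈ s, μ i - t * (s.card - ∑ i, γ i) := by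
        rw [Finset.sum_add_distrib, Finset.sum_ite_mem, Finset.univ_inter, Finset.sum_sub_distrib,
          ← Finset.mul_sum]
        simp only [Finset.sum_const, nsmul_eq_mul]
        ring
    _ ≤ ∑ i ∈ s, μ i := sub_le_self _ (mul_nonneg ht (sub_nonneg.mpr hγ))

lemma sum_mul_le_sum_filter_lt_of_antitone {n k : ℕ} {μ γ : Fin n → ℝ} (hμ : Antitone μ)
    (hμ0 : ∀ i, 0 ≤ μ i) (hγ0 : ∀ i, 0 ≤ γ i) (hγ1 : ∀ i, γ i ≤ 1) (hγ : ∑ i, γ i ≤ k) :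
    ∑ i, μ i * γ i ≤ ∑ i ∈ Finset.univ.filter (fun i : Fin n => (i : ℕ) < k), μ i := by
  rcases lt_or_ge k n with hkn | hnk
  · refine Finset.sum_mul_le_sum_of_threshold (hμ0 ⟨k, hkn⟩) (fun i hi => hμ ?_)
      (fun i hi => hμ ?_) hγ0 hγ1 ?_
    · simp only [Finset.mem_filter, Finset.mem_univ, true_and] at hi
      exact Fin.mk_le_of_le_val hi.le
    · simp only [Finset.mem_filter, Finset.mem_univ, true_and, not_lt] at hi
      exact hi
    · rwa [Fin.card_filter_val_lt, min_eq_right hkn.le]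
  · have hall : Finset.univ.filter (fun i : Fin n => (i : ℕ) < k) = Finset.univ :=
      Finset.filter_true_of_mem fun i _ => i.isLt.trans_le hnk
    rw [hall]
    exact Finset.sum_le_sum fun i _ => mul_le_of_le_one_right (hμ0 i) (hγ1 i)

lemma inner_le_norm_mul_sqrt_sum_sq_inner {E : Type*} [NormedAddCommGroup E]
    [InnerProductSpace ℝ E] {V : Submodule ℝ E} [V.HasOrthogonalProjection] {ι : Type*}
    [Fintype ι] (b : OrthonormalBasis ι ℝ V) {a : E} (ha : a ∈ V) (y : E) :
    ⟪a, y⟫ ≤ ‖a‖ * √(∑ t, ⟪(b t : E), y⟫ ^ 2) := by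
  have hnorm : √(∑ t, ⟪(b t : E), y⟫ ^ 2) = ‖V.orthogonalProjectionOnto y‖ := by
    simp_rw [← Submodule.inner_orthogonalProjectionOnto_eq_of_mem_left, b.sum_sq_inner_right,
      Real.sqrt_sq (norm_nonneg _)]
  rw [hnorm, ← Submodule.inner_orthogonalProjectionOnto_eq_of_mem_left ⟨a, ha⟩]
  exact real_inner_le_norm _ _

section

variable {m n : ℕ}

lemma frobNorm_nonneg (A : Matrix (Fin m) (Fin n) ℝ) : 0 ≤ frobNorm A :=
  Real.sqrt_nonneg _

lemma frobNorm_sq (A : Matrix (Fin m) (Fin n) ℝ) : frobNorm A ^ 2 = ∑ i, ∑ j, A i j ^ 2 :=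
  Real.sq_sqrt (by positivity)

lemma frobNorm_eq_zero_iff {A : Matrix (Fin m) (Fin n) ℝ} : frobNorm A = 0 ↔ A = 0 := by
  rw [frobNorm, Real.sqrt_eq_zero (by positivity),
    Finset.sum_eq_zero_iff_of_nonneg fun i _ => by positivity, ← Matrix.ext_iff]
  simp [Finset.sum_eq_zero_iff_of_nonneg, sq_nonneg]

lemma frobInner_le_frobNorm_mul (A B : Matrix (Fin m) (Fin n) ℝ) :
    frobInner A B ≤ frobNorm A * frobNorm B := by
  simp only [frobInner, frobNorm, ← Fintype.sum_prod_type']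
  exact Real.sum_mul_le_sqrt_mul_sqrt _ _ _

lemma frobInner_smul_self (A : Matrix (Fin m) (Fin n) ℝ) (c : ℝ) :
    frobInner A (c • A) = c * frobNorm A ^ 2 := by
  simp only [frobInner, frobNorm_sq, Finset.mul_sum, Matrix.smul_apply, smul_eq_mul]
  exact Finset.sum_congr rfl fun _ _ => Finset.sum_congr rfl fun _ _ => by ring

lemma HasRIP.eq_of_map_eq {p r : ℕ} {𝒜 : Matrix (Fin m) (Fin n) ℝ →ₗ[ℝ] EuclideanSpace ℝ (Fin p)}
    {δ : ℝ} (h𝒜 : HasRIP 𝒜 r δ) (hδ : δ < 1) {X Y : Matrix (Fin m) (Fin n) ℝ}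
    (hr : X.rank + Y.rank ≤ r) (hXY : 𝒜 X = 𝒜 Y) : X = Y := by
  have hle := (h𝒜 (X - Y) ((rank_sub_le X Y).trans hr)).1
  rw [map_sub, hXY, sub_self, norm_zero] at hle
  have hzero : frobNorm (X - Y) = 0 :=
    le_antisymm (nonpos_of_mul_nonpos_right hle (sub_pos.mpr hδ)) (frobNorm_nonneg _)
  exact sub_eq_zero.mp (frobNorm_eq_zero_iff.mp hzero)

noncomputable def gramEigenvalues (A : Matrix (Fin m) (Fin n) ℝ) : Fin n → ℝ :=
  (isHermitian_transpose_mul_self A).eigenvalues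

noncomputable def svalPerm (A : Matrix (Fin m) (Fin n) ℝ) : Equiv.Perm (Fin n) :=
  Fin.revPerm.trans (Tuple.sort (gramEigenvalues A))

lemma gramEigenvalues_nonneg (A : Matrix (Fin m) (Fin n) ℝ) (j : Fin n) :
    0 ≤ gramEigenvalues A j :=
  eigenvalues_conjTranspose_mul_self_nonneg A j

lemma svalsDesc_eq (A : Matrix (Fin m) (Fin n) ℝ) (i : Fin n) :
    svalsDesc A i = √((gramEigenvalues A ∘ Tuple.sort (gramEigenvalues A)) i.rev) :=
  rfl

lemma svalsDesc_sq (A : Matrix (Fin m) (Fin n) ℝ) (i : Fin n) :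
    svalsDesc A i ^ 2 = gramEigenvalues A (svalPerm A i) :=
  Real.sq_sqrt (gramEigenvalues_nonneg A _)

lemma svalsDesc_nonneg (A : Matrix (Fin m) (Fin n) ℝ) (i : Fin n) : 0 ≤ svalsDesc A i :=
  Real.sqrt_nonneg _

lemma sum_svalsDesc_sq (A : Matrix (Fin m) (Fin n) ℝ) :
    ∑ i, svalsDesc A i ^ 2 = frobNorm A ^ 2 := by
  have htrace := (isHermitian_transpose_mul_self A).trace_eq_sum_eigenvalues
  simp only [RCLike.ofReal_real_eq_id, id] at htrace
  simp_rw [svalsDesc_sq, Equiv.sum_comp (svalPerm A) (gramEigenvalues A), gramEigenvalues,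
    ← htrace, frobNorm_sq, Finset.sum_comm (γ := Fin m)]
  simp [Matrix.trace, Matrix.mul_apply, sq]

lemma card_svalsDesc_ne_zero (A : Matrix (Fin m) (Fin n) ℝ) :
    Fintype.card {i // svalsDesc A i ≠ 0} = A.rank := by
  rw [← rank_transpose_mul_self, (isHermitian_transpose_mul_self A).rank_eq_card_non_zero_eigs]
  refine Fintype.card_congr ((svalPerm A).subtypeEquiv fun i => ?_)
  rw [svalsDesc, Real.sqrt_ne_zero']
  exact (gramEigenvalues_nonneg A _).lt_iff_ne'

lemma map_gramEigenvalues_smul (A : Matrix (Fin m) (Fin n) ℝ) (c : ℝ) :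
    Finset.univ.val.map (gramEigenvalues (c • A)) =
      Finset.univ.val.map fun j => c ^ 2 * gramEigenvalues A j := by
  have hgram : (c • A)ᵀ * (c • A) = c ^ 2 • (Aᵀ * A) := by
    rw [transpose_smul, Matrix.smul_mul, Matrix.mul_smul, smul_smul, sq]
  have hchar : ((c • A)ᵀ * (c • A)).charpoly =
      ((Finset.univ.val.map fun j => c ^ 2 * gramEigenvalues A j).map
        fun a => Polynomial.X - Polynomial.C a).prod := by
    rw [hgram, (isHermitian_transpose_mul_self A).charpoly_smul, Multiset.map_map]; rfl
  have h := (isHermitian_transpose_mul_self (c • A)).roots_charpoly_eq_eigenvalues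
  rw [hchar, Polynomial.roots_multiset_prod_X_sub_C] at h
  simp only [RCLike.ofReal_real_eq_id, Function.id_comp] at h
  exact h.symm

lemma svalsDesc_smul (A : Matrix (Fin m) (Fin n) ℝ) (c : ℝ) (i : Fin n) :
    svalsDesc (c • A) i = |c| * svalsDesc A i := by
  have hsorted : gramEigenvalues (c • A) ∘ Tuple.sort (gramEigenvalues (c • A)) =
      fun j => c ^ 2 * (gramEigenvalues A ∘ Tuple.sort (gramEigenvalues A)) j := by
    refine (Tuple.monotone_sort _).eq_of_map_univ_eq
      (fun _ _ hij => mul_le_mul_of_nonneg_left (Tuple.monotone_sort _ hij) (sq_nonneg c)) ?_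
    rw [Multiset.map_univ_val_comp_perm, map_gramEigenvalues_smul]
    exact (Multiset.map_univ_val_comp_perm (fun j => c ^ 2 * gramEigenvalues A j) _).symm
  rw [svalsDesc_eq, svalsDesc_eq, hsorted, Real.sqrt_mul (sq_nonneg c), Real.sqrt_sq_eq_abs]

lemma antitone_svalsDesc_sq (A : Matrix (Fin m) (Fin n) ℝ) :
    Antitone fun i => svalsDesc A i ^ 2 := fun _ _ hij => by
  simp only [svalsDesc_sq]
  exact Tuple.monotone_sort _ (Fin.rev_le_rev.mpr hij)

lemma kyFan2_sq (k : ℕ) (A : Matrix (Fin m) (Fin n) ℝ) :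
    kyFan2 k A ^ 2 = ∑ i ∈ Finset.univ.filter (fun i : Fin n => (i : ℕ) < k), svalsDesc A i ^ 2 :=
  Real.sq_sqrt (Finset.sum_nonneg fun _ _ => sq_nonneg _)

lemma kyFan2_nonneg (k : ℕ) (A : Matrix (Fin m) (Fin n) ℝ) : 0 ≤ kyFan2 k A :=
  Real.sqrt_nonneg _

lemma kyFan2_smul (k : ℕ) (A : Matrix (Fin m) (Fin n) ℝ) (c : ℝ) :
    kyFan2 k (c • A) = |c| * kyFan2 k A := by
  simp_rw [kyFan2, svalsDesc_smul, mul_pow, ← Finset.mul_sum, Real.sqrt_mul (sq_nonneg _),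
    Real.sqrt_sq (abs_nonneg c)]

lemma kyFan2_zero (k : ℕ) : kyFan2 k (0 : Matrix (Fin m) (Fin n) ℝ) = 0 := by
  simpa using kyFan2_smul k (0 : Matrix (Fin m) (Fin n) ℝ) 0

lemma svalsDesc_sq_le_kyFan2_sq {k : ℕ} (hk : 1 ≤ k) (A : Matrix (Fin m) (Fin n) ℝ) (i : Fin n) :
    svalsDesc A i ^ 2 ≤ kyFan2 k A ^ 2 := by
  have h0 : (⟨0, i.pos⟩ : Fin n) ∈ Finset.univ.filter (fun i : Fin n => (i : ℕ) < k) := by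
    simp only [Finset.mem_filter, Finset.mem_univ, true_and]; omega
  rw [kyFan2_sq]
  exact (antitone_svalsDesc_sq A (Nat.zero_le i.val)).trans
    (Finset.single_le_sum (fun _ _ => sq_nonneg _) h0)

lemma frobNorm_sq_le_mul_kyFan2_sq {k : ℕ} (hk : 1 ≤ k) (A : Matrix (Fin m) (Fin n) ℝ) :
    frobNorm A ^ 2 ≤ n * kyFan2 k A ^ 2 := by
  rw [← sum_svalsDesc_sq]
  exact (Finset.sum_le_sum fun i _ => svalsDesc_sq_le_kyFan2_sq hk A i).trans (by simp)

lemma kyFan2_pos {k : ℕ} (hk : 1 ≤ k) {A : Matrix (Fin m) (Fin n) ℝ} (hA : A ≠ 0) :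
    0 < kyFan2 k A := by
  refine (kyFan2_nonneg k A).lt_of_ne' fun h0 => hA (frobNorm_eq_zero_iff.mp ?_)
  have := frobNorm_sq_le_mul_kyFan2_sq hk A
  rw [h0] at this
  exact le_antisymm (by nlinarith) (frobNorm_nonneg A)

lemma kyFan2_lt_frobNorm_of_lt_rank {k : ℕ} {A : Matrix (Fin m) (Fin n) ℝ} (h : k < A.rank) :
    kyFan2 k A < frobNorm A := by
  obtain ⟨i, hik, hi⟩ : ∃ i : Fin n, k ≤ (i : ℕ) ∧ svalsDesc A i ≠ 0 := by
    by_contra! hall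
    have hrank : A.rank ≤ k := by
      rw [← card_svalsDesc_ne_zero, Fintype.card_subtype]
      calc (Finset.univ.filter fun i => svalsDesc A i ≠ 0).card
          ≤ (Finset.univ.filter fun i : Fin n => (i : ℕ) < k).card :=
            Finset.card_le_card (Finset.monotone_filter_right _ fun i _ hi => by
              by_contra hik; exact hi (hall i (not_lt.mp hik)))
        _ ≤ k := Fin.card_filter_val_lt.trans_le (min_le_right _ _)
    omega
  have hsq : kyFan2 k A ^ 2 < frobNorm A ^ 2 := by
    rw [kyFan2_sq, ← sum_svalsDesc_sq,
      ← Finset.sum_filter_add_sum_filter_not Finset.univ fun i : Fin n => (i : ℕ) < k]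
    refine lt_add_of_pos_right _ (Finset.sum_pos' (fun _ _ => sq_nonneg _) ⟨i, ?_, ?_⟩)
    · simpa using hik
    · exact pow_pos ((svalsDesc_nonneg A i).lt_of_ne' hi) 2
  exact lt_of_pow_lt_pow_left₀ 2 (frobNorm_nonneg A) hsq

lemma sum_gramEigenvalues_mul_le_kyFan2_sq {k : ℕ} (Y : Matrix (Fin m) (Fin n) ℝ) {c : Fin n → ℝ}
    (hc0 : ∀ j, 0 ≤ c j) (hc1 : ∀ j, c j ≤ 1) (hc : ∑ j, c j ≤ k) :
    ∑ j, gramEigenvalues Y j * c j ≤ kyFan2 k Y ^ 2 := by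
  rw [kyFan2_sq, ← Equiv.sum_comp (svalPerm Y)]
  simp_rw [← svalsDesc_sq]
  refine sum_mul_le_sum_filter_lt_of_antitone (antitone_svalsDesc_sq Y) (fun i => sq_nonneg _)
    (fun i => hc0 _) (fun i => hc1 _) ?_
  rwa [Equiv.sum_comp (svalPerm Y) c]

theorem sum_norm_sq_toEuclideanLin_le_kyFan2_sq {k : ℕ} {ι : Type*} [Fintype ι]
    {w : ι → EuclideanSpace ℝ (Fin n)} (hw : Orthonormal ℝ w) (hk : Fintype.card ι ≤ k)
    (Y : Matrix (Fin m) (Fin n) ℝ) :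
    ∑ t, ‖toEuclideanLin Y (w t)‖ ^ 2 ≤ kyFan2 k Y ^ 2 := by
  set hM := isHermitian_transpose_mul_self Y
  set v := hM.eigenvectorBasis
  have hexpand : ∑ t, ‖toEuclideanLin Y (w t)‖ ^ 2 =
      ∑ j, gramEigenvalues Y j * ∑ t, ⟪v j, w t⟫ ^ 2 := by
    simp_rw [norm_sq_toEuclideanLin_eq_inner, hM.inner_toEuclideanLin_self, Finset.mul_sum]
    exact Finset.sum_comm
  have hbessel : ∀ j, ∑ t, ⟪v j, w t⟫ ^ 2 ≤ 1 := fun j => by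
    simpa [real_inner_comm, Real.norm_eq_abs, sq_abs, v.orthonormal.1 j] using
      hw.sum_inner_products_le (v j) (s := Finset.univ)
  have hparseval : ∑ j, ∑ t, ⟪v j, w t⟫ ^ 2 = Fintype.card ι := by
    rw [Finset.sum_comm]
    simp [v.sum_sq_inner_right, hw.1]
  rw [hexpand]
  exact sum_gramEigenvalues_mul_le_kyFan2_sq Y (fun j => Finset.sum_nonneg fun t _ => sq_nonneg _)
    hbessel (hparseval.trans_le (by exact_mod_cast hk))

lemma finrank_span_rows_eq_rank (A : Matrix (Fin m) (Fin n) ℝ) :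
    Module.finrank ℝ (Submodule.span ℝ (Set.range fun i => WithLp.toLp 2 (A i))) = A.rank := by
  rw [rank_eq_finrank_span_row,
    ← LinearEquiv.finrank_map_eq (WithLp.linearEquiv 2 ℝ (Fin n → ℝ)).symm, Submodule.map_span,
    ← Set.range_comp]
  rfl

theorem frobInner_le_frobNorm_mul_kyFan2 {k : ℕ} {A : Matrix (Fin m) (Fin n) ℝ} (hA : A.rank ≤ k)
    (Y : Matrix (Fin m) (Fin n) ℝ) : frobInner A Y ≤ frobNorm A * kyFan2 k Y := by
  set V := Submodule.span ℝ (Set.range fun i => WithLp.toLp 2 (A i))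
  set b := stdOrthonormalBasis ℝ V
  have hKyFan := sum_norm_sq_toEuclideanLin_le_kyFan2_sq (k := k)
    (w := fun t => (b t : EuclideanSpace ℝ (Fin n))) (b.orthonormal.comp_linearIsometry V.subtypeₗᵢ)
    (by simpa using (finrank_span_rows_eq_rank A).trans_le hA) Y
  have hrows : ∀ i, ⟪WithLp.toLp 2 (A i), WithLp.toLp 2 (Y i)⟫ ≤
      ‖WithLp.toLp 2 (A i)‖ * √(∑ t, ⟪(b t : EuclideanSpace ℝ (Fin n)), WithLp.toLp 2 (Y i)⟫ ^ 2) :=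
    fun i => inner_le_norm_mul_sqrt_sum_sq_inner b (Submodule.subset_span ⟨i, rfl⟩) _
  calc frobInner A Y = ∑ i, ⟪WithLp.toLp 2 (A i), WithLp.toLp 2 (Y i)⟫ := by
        simp [frobInner, PiLp.inner_apply, mul_comm]
    _ ≤ _ := Finset.sum_le_sum fun i _ => hrows i
    _ ≤ _ := Real.sum_mul_le_sqrt_mul_sqrt _ _ _
    _ = frobNorm A * √(∑ t, ‖toEuclideanLin Y (b t)‖ ^ 2) := by
        congr 1
        · simp [frobNorm, EuclideanSpace.norm_sq_eq]
        · simp_rw [Real.sq_sqrt (Finset.sum_nonneg fun _ _ => sq_nonneg _),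
            norm_sq_toEuclideanLin_eq_sum, real_inner_comm]
          rw [Finset.sum_comm]
    _ ≤ frobNorm A * kyFan2 k Y :=
        mul_le_mul_of_nonneg_left (Real.sqrt_le_iff.mpr ⟨kyFan2_nonneg k Y, hKyFan⟩)
          (frobNorm_nonneg A)

lemma kyFan2Dual_le_frobNorm_of_rank_le {k : ℕ} {A : Matrix (Fin m) (Fin n) ℝ} (hA : A.rank ≤ k) :
    kyFan2Dual k A ≤ frobNorm A := by
  refine csSup_le ⟨frobInner A 0, 0, by rw [kyFan2_zero]; exact zero_le_one, rfl⟩ ?_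
  rintro _ ⟨Y, hY, rfl⟩
  exact (frobInner_le_frobNorm_mul_kyFan2 hA Y).trans
    (mul_le_of_le_one_right (frobNorm_nonneg A) hY)

-- `1 ≤ k` makes the set in `kyFan2Dual` bounded above; for `k = 0` its `sSup` is a junk value.
lemma frobInner_le_kyFan2Dual {k : ℕ} (hk : 1 ≤ k) (A : Matrix (Fin m) (Fin n) ℝ)
    {Y : Matrix (Fin m) (Fin n) ℝ} (hY : kyFan2 k Y ≤ 1) : frobInner A Y ≤ kyFan2Dual k A := by
  refine le_csSup ⟨frobNorm A * √n, ?_⟩ ⟨Y, hY, rfl⟩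
  rintro _ ⟨Z, hZ, rfl⟩
  have hZn : frobNorm Z ≤ √n := by
    rw [Real.le_sqrt (frobNorm_nonneg Z) (Nat.cast_nonneg n)]
    calc frobNorm Z ^ 2 ≤ n * kyFan2 k Z ^ 2 := frobNorm_sq_le_mul_kyFan2_sq hk Z
      _ ≤ n * 1 := by gcongr; exact pow_le_one₀ (kyFan2_nonneg k Z) hZ
      _ = n := mul_one _
  exact (frobInner_le_frobNorm_mul A Z).trans (mul_le_mul_of_nonneg_left hZn (frobNorm_nonneg A))

lemma frobNorm_lt_kyFan2Dual_of_lt_rank {k : ℕ} (hk : 1 ≤ k) {A : Matrix (Fin m) (Fin n) ℝ}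
    (h : k < A.rank) : frobNorm A < kyFan2Dual k A := by
  have hA : A ≠ 0 := by rintro rfl; simp at h
  have hfrob : 0 < frobNorm A := (frobNorm_nonneg A).lt_of_ne' (frobNorm_eq_zero_iff.not.mpr hA)
  have hs := kyFan2_pos hk hA
  set s := kyFan2 k A
  have hlt : s < frobNorm A := kyFan2_lt_frobNorm_of_lt_rank h
  have hY : kyFan2 k (s⁻¹ • A) ≤ 1 := by
    rw [kyFan2_smul, abs_inv, abs_of_pos hs, inv_mul_cancel₀ hs.ne']
  calc frobNorm A < s⁻¹ * frobNorm A ^ 2 := by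
        rw [lt_inv_mul_iff₀ hs]; nlinarith
    _ = frobInner A (s⁻¹ • A) := (frobInner_smul_self A _).symm
    _ ≤ kyFan2Dual k A := frobInner_le_kyFan2Dual hk A hY

end

theorem unique_minimizer_diff_general {m n p k : ℕ} (hk1 : 1 ≤ k)
    (𝒜 : Matrix (Fin m) (Fin n) ℝ →ₗ[ℝ] EuclideanSpace ℝ (Fin p))
    (hδ : ∃ δ : ℝ, δ < 1 ∧ HasRIP 𝒜 (2 * k) δ)
    (b : EuclideanSpace ℝ (Fin p))
    (X₀ : Matrix (Fin m) (Fin n) ℝ) (hA : 𝒜 X₀ = b) (hr : X₀.rank ≤ k) :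
    ∀ X : Matrix (Fin m) (Fin n) ℝ, 𝒜 X = b → X ≠ X₀ →
      kyFan2Dual k X₀ - frobNorm X₀ < kyFan2Dual k X - frobNorm X := by
  intro X hX hne
  obtain ⟨δ, hδ1, hRIP⟩ := hδ
  have hrank : k < X.rank := by
    by_contra! hle
    exact hne (hRIP.eq_of_map_eq hδ1 (by omega) (hX.trans hA.symm))
  have h₀ := kyFan2Dual_le_frobNorm_of_rank_le hr
  have h₁ := frobNorm_lt_kyFan2Dual_of_lt_rank hk1 hrank
  linarith

/-- under `δ_{2k}(𝒜) < 1`, a rank-≤k feasible `X₀` is the unique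
minimizer of `‖X‖_{k,2}^⋆ − ‖X‖_F` over `{X : 𝒜 X = b}`. -/
theorem unique_minimizer_diff {m n p k : ℕ} (hk1 : 1 ≤ k) (hk : k ≤ min m n)
    (𝒜 : Matrix (Fin m) (Fin n) ℝ →ₗ[ℝ] EuclideanSpace ℝ (Fin p))
    (hδ : ∃ δ : ℝ, δ < 1 ∧ HasRIP 𝒜 (2 * k) δ)
    (b : EuclideanSpace ℝ (Fin p)) (hb : b ≠ 0)
    (X₀ : Matrix (Fin m) (Fin n) ℝ) (hA : 𝒜 X₀ = b) (hr : X₀.rank ≤ k) :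
    ∀ X : Matrix (Fin m) (Fin n) ℝ, 𝒜 X = b → X ≠ X₀ →
      kyFan2Dual k X₀ - frobNorm X₀ < kyFan2Dual k X - frobNorm X :=
  unique_minimizer_diff_general hk1 𝒜 hδ b X₀ hA hr
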